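/- Let w ∈ Σ* and θ an antimorphic involution. Then |C_θ(w)| = |w|+1 if and only if w is not of the form (αβ)^{i+1} α v where α, v ∈ Σ*, β ∈ Σ+, i ≥ 0, and α and β are θ-palindromes. -/
import Mathlib


variable {α : Type*}

/-- θ is an antimorphic involution on Σ* : θ(uv) = θ(v)θ(u) and θ² = id. -/
def IsAntimorphicInvolution (θ : List α → List α) : Prop :=
  (∀ u v : List α, θ (u ++ v) = θ v ++ θ u) ∧ ∀ u : List α, θ (θ u) = u

/-- The set of θ-conjugates of w: C_θ(w) = { θ(v) ++ u : w = u ++ v }. -/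
def thetaConjugates (θ : List α → List α) (w : List α) : Set (List α) :=
  {x | ∃ u v : List α, w = u ++ v ∧ x = θ v ++ u}

/-- n-fold concatenation power of a word. -/
def listPow (z : List α) (n : ℕ) : List α := (List.replicate n z).flatten

/-- A word is primitive if it is not a proper power. -/
def Primitive (z : List α) : Prop :=
  z ≠ [] ∧ ∀ (t : List α) (k : ℕ), z = listPow t k → k = 1

/-- The conjugacy class of w: { v ++ u : w = u ++ v }. -/
def conjClass (w : List α) : Set (List α) := {x | ∃ u v : List α, w = u ++ v ∧ x = v ++ u}

section aux
variable {θ : List α → List α}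

lemma theta_nil (hθ : IsAntimorphicInvolution θ) : θ [] = ([] : List α) := by
  have h := hθ.1 [] []
  simp only [List.append_nil] at h
  have hl := congrArg List.length h
  simp only [List.length_append] at hl
  have : (θ ([] : List α)).length = 0 := by omega
  exact List.eq_nil_of_length_eq_zero this

lemma theta_length (hθ : IsAntimorphicInvolution θ) (u : List α) : (θ u).length = u.length := by
  have hsingle : ∀ a : α, θ [a] ≠ [] := by
    intro a h
    have := hθ.2 [a]
    rw [h, theta_nil hθ] at this
    exact List.cons_ne_nil a [] this.symm
  have hge : ∀ u : List α, u.length ≤ (θ u).length := by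
    intro u
    induction u with
    | nil => simp
    | cons a t ih =>
      have : θ (a :: t) = θ t ++ θ [a] := by
        have := hθ.1 [a] t; simpa using this
      rw [this, List.length_append]
      have : 1 ≤ (θ [a]).length := by
        have := hsingle a
        exact List.length_pos_iff.mpr this
      simp only [List.length_cons]
      omega
  have h1 := hge u
  have h2 := hge (θ u)
  rw [hθ.2 u] at h2
  omega

lemma listPow_succ (z : List α) (n : ℕ) : listPow z (n+1) = z ++ listPow z n := by
  simp [listPow, List.replicate_succ]

lemma listPow_succ' (z : List α) (n : ℕ) : listPow z (n+1) = listPow z n ++ z := by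
  simp [listPow, List.replicate_succ', List.flatten_append]

lemma listPow_length (z : List α) (n : ℕ) : (listPow z n).length = n * z.length := by
  induction n with
  | zero => simp [listPow]
  | succ n ih => rw [listPow_succ, List.length_append, ih]; ring

lemma theta_listPow (hθ : IsAntimorphicInvolution θ) (z : List α) (n : ℕ) :
    θ (listPow z n) = listPow (θ z) n := by
  induction n with
  | zero => simpa [listPow] using theta_nil hθ
  | succ n ih => rw [listPow_succ, hθ.1, ih, ← listPow_succ']

lemma listPow_shift (a b : List α) (n : ℕ) :
    a ++ listPow (b ++ a) n = listPow (a ++ b) n ++ a := by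
  induction n with
  | zero => simp [listPow]
  | succ n ih =>
    rw [listPow_succ, listPow_succ]
    calc a ++ ((b ++ a) ++ listPow (b ++ a) n)
        = (a ++ b) ++ (a ++ listPow (b ++ a) n) := by simp [List.append_assoc]
      _ = (a ++ b) ++ (listPow (a ++ b) n ++ a) := by rw [ih]
      _ = ((a ++ b) ++ listPow (a ++ b) n) ++ a := by simp [List.append_assoc]

lemma ls_aux : ∀ (n : ℕ) (u x y : List α), u.length ≤ n → x ≠ [] → x ++ u = u ++ y →
    ∃ p q i, x = p ++ q ∧ y = q ++ p ∧ u = listPow (p ++ q) i ++ p := by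
  intro n
  induction n with
  | zero =>
    intro u x y hu hx h
    have hu0 : u = [] := List.eq_nil_of_length_eq_zero (Nat.le_zero.mp hu)
    subst hu0
    refine ⟨[], x, 0, by simp, by simpa using h.symm, by simp [listPow]⟩
  | succ n ih =>
    intro u x y hu hx h
    by_cases hc : u.length < x.length
    · have h1 : u <+: x ++ u := h ▸ List.prefix_append u y
      have h2 : x <+: x ++ u := List.prefix_append x u
      have hux : u <+: x := List.prefix_of_prefix_length_le h1 h2 (le_of_lt hc)
      obtain ⟨t, ht⟩ := hux
      refine ⟨u, t, 0, ht.symm, ?_, by simp [listPow]⟩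
      rw [← ht] at h
      have : u ++ (t ++ u) = u ++ y := by simpa [List.append_assoc] using h
      exact (List.append_cancel_left this).symm
    · push_neg at hc
      have h1 : u <+: u ++ y := List.prefix_append u y
      have h2 : x <+: x ++ u := List.prefix_append x u
      rw [h] at h2
      have hxu : x <+: u := List.prefix_of_prefix_length_le h2 h1 hc
      obtain ⟨u', hu'⟩ := hxu
      subst hu'
      have heq : x ++ u' = u' ++ y := by
        have : x ++ (x ++ u') = x ++ (u' ++ y) := by simpa [List.append_assoc] using h
        exact List.append_cancel_left this
      have hxpos : 0 < x.length := List.length_pos_iff.mpr hx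
      have hlen : u'.length ≤ n := by
        rw [List.length_append] at hu; omega
      obtain ⟨p, q, i, hp, hq, hu'⟩ := ih u' x y hlen hx heq
      exact ⟨p, q, i + 1, hp, hq, by
        rw [hu', listPow_succ, hp]; simp [List.append_assoc]⟩

lemma collision_form (hθ : IsAntimorphicInvolution θ) (w : List α) (k k' : ℕ)
    (hk : k < k') (hk' : k' ≤ w.length)
    (hf : θ (w.drop k) ++ w.take k = θ (w.drop k') ++ w.take k') :
    ∃ (a v b : List α) (i : ℕ), b ≠ [] ∧ θ a = a ∧ θ b = b ∧
      w = listPow (a ++ b) (i + 1) ++ a ++ v := by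
  set u₁ := w.take k with hu₁
  set v₂ := w.drop k' with hv₂
  set s := (w.drop k).take (k' - k) with hs
  have hds : w.drop k = s ++ v₂ := by
    rw [hs, hv₂]
    have h1 : List.drop k' w = List.drop (k' - k) (List.drop k w) := by
      rw [List.drop_drop]
      congr 1
      omega
    rw [h1]
    exact (List.take_append_drop _ _).symm
  have hts : w.take k' = u₁ ++ s := by
    have : k' = k + (k' - k) := by omega
    rw [this, List.take_add]
  have hslen : s.length = k' - k := by
    rw [hs, List.length_take, List.length_drop]
    omega
  have hsne : s ≠ [] := by
    intro h
    rw [h] at hslen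
    simp at hslen
    omega
  have key : θ s ++ u₁ = u₁ ++ s := by
    rw [hds, hts, hθ.1] at hf
    rw [List.append_assoc] at hf
    exact List.append_cancel_left hf
  have hθs : θ s ≠ [] := by
    intro h
    have := theta_length hθ s
    rw [h] at this
    exact hsne (List.eq_nil_of_length_eq_zero this.symm)
  obtain ⟨p, q, i, hpq, hqp, hu⟩ := ls_aux u₁.length u₁ (θ s) s le_rfl hθs key
  have hth : θ p ++ θ q = p ++ q := by
    rw [hqp, hθ.1] at hpq
    exact hpq
  have hlen : (θ p).length = p.length := theta_length hθ p
  obtain ⟨hp, hq⟩ := List.append_inj hth hlen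
  have hw : w = u₁ ++ s ++ v₂ := by
    rw [← hts, hv₂, List.take_append_drop]
  by_cases hqnil : q = []
  · subst hqnil
    simp only [List.nil_append] at hqp
    refine ⟨[], v₂, p, i + 1, ?_, theta_nil hθ, hp, ?_⟩
    · intro h; apply hsne; rw [hqp, h]
    · rw [hw, hu, hqp]
      simp only [List.append_nil, List.nil_append, listPow_succ', List.append_assoc]
  · refine ⟨p, v₂, q, i, hqnil, hp, hq, ?_⟩
    rw [hw, hu, hqp, listPow_succ' (p ++ q) i]
    simp [List.append_assoc]

lemma form_collision (hθ : IsAntimorphicInvolution θ) (w a v b : List α) (i : ℕ)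
    (hb : b ≠ []) (ha : θ a = a) (hbb : θ b = b)
    (hw : w = listPow (a ++ b) (i + 1) ++ a ++ v) :
    ∃ k k' : ℕ, k < k' ∧ k' ≤ w.length ∧
      θ (w.drop k) ++ w.take k = θ (w.drop k') ++ w.take k' := by
  refine ⟨a.length, (listPow (a ++ b) (i + 1) ++ a).length, ?_, ?_, ?_⟩
  · rw [List.length_append, listPow_length, List.length_append]
    have : 0 < b.length := List.length_pos_iff.mpr hb
    nlinarith
  · rw [hw]
    simp [List.append_assoc]
  · have hw2 : w = (listPow (a ++ b) (i + 1) ++ a) ++ v := by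
      rw [hw]
    have hdrop' : w.drop (listPow (a ++ b) (i + 1) ++ a).length = v := by
      rw [hw2, List.drop_left]
    have htake' : w.take (listPow (a ++ b) (i + 1) ++ a).length =
        listPow (a ++ b) (i + 1) ++ a := by rw [hw2, List.take_left]
    have hw3 : w = a ++ (b ++ listPow (a ++ b) i ++ (a ++ v)) := by
      rw [hw, listPow_succ]
      simp [List.append_assoc]
    have hdrop : w.drop a.length = b ++ listPow (a ++ b) i ++ (a ++ v) := by
      rw [hw3, List.drop_left]
    have htake : w.take a.length = a := by rw [hw3, List.take_left]
    rw [hdrop, htake, hdrop', htake']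
    rw [hθ.1, hθ.1, hθ.1, theta_listPow hθ, hθ.1, ha, hbb]
    rw [listPow_succ']
    simp only [← List.append_assoc]
    rw [List.append_assoc (θ v) a, listPow_shift, ← List.append_assoc]

end aux

theorem stmt2 (θ : List α → List α) (hθ : IsAntimorphicInvolution θ) (w : List α) :
    (thetaConjugates θ w).ncard = w.length + 1 ↔
      ¬ ∃ (a v b : List α) (i : ℕ), b ≠ [] ∧ θ a = a ∧ θ b = b ∧
        w = listPow (a ++ b) (i + 1) ++ a ++ v := by
  classical
  set n := w.length with hn
  set f : ℕ → List α := fun k => θ (w.drop k) ++ w.take k with hfdef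
  have hset : thetaConjugates θ w = ↑((Finset.range (n+1)).image f) := by
    ext x
    simp only [thetaConjugates, Set.mem_setOf_eq, Finset.coe_image, Set.mem_image,
      Finset.mem_coe, Finset.mem_range]
    constructor
    · rintro ⟨u, v, hw, hx⟩
      refine ⟨u.length, ?_, ?_⟩
      · rw [hn, hw, List.length_append]; omega
      · simp only [hfdef]
        have h1 : w.take u.length = u := by rw [hw, List.take_left]
        have h2 : w.drop u.length = v := by rw [hw, List.drop_left]
        rw [h1, h2, hx]
    · rintro ⟨k, hk, rfl⟩
      exact ⟨w.take k, w.drop k, (List.take_append_drop k w).symm, rfl⟩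
  rw [hset, Set.ncard_coe_finset]
  constructor
  · intro hcard
    rintro ⟨a, v, b, i, hb, ha, hbb, hw⟩
    obtain ⟨k, k', hkk, hk', hfeq⟩ := form_collision hθ w a v b i hb ha hbb hw
    have hinj : Set.InjOn f (Finset.range (n+1)) := by
      apply Finset.injOn_of_card_image_eq
      rw [hcard, Finset.card_range]
    have : k = k' := hinj (by simp only [Finset.coe_range]; simp; omega)
      (by simp only [Finset.coe_range]; simp; omega) hfeq
    omega
  · intro hform
    have hinj : Set.InjOn f (Finset.range (n+1)) := by
      intro k hk k' hk' hfe
      simp only [Finset.coe_range, Set.mem_Iio] at hk hk'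
      by_contra hne
      rcases Nat.lt_or_ge k k' with h | h
      · exact hform (collision_form hθ w k k' h (by omega) hfe)
      · have hlt : k' < k := by omega
        exact hform (collision_form hθ w k' k hlt (by omega) hfe.symm)
    rw [Finset.card_image_of_injOn hinj, Finset.card_range]
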